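/- Let S be a continuous t-conorm on [0,1] with residuum ⊸ that is weaker than the Łukasiewicz t-conorm. Then 𝐝, defined by 𝐝((x₁,x₂),(y₁,y₂)) = S(d(x₁,y₁), d(x₂,y₂)), is a metric on [0,1]²: 𝐝(x̄,ȳ) = 0 if and only if x̄ = ȳ, 𝐝(x̄,ȳ) = 𝐝(ȳ,x̄), and 𝐝(x̄,ȳ) ≤ 𝐝(x̄,z̄) + 𝐝(z̄,ȳ) for all x̄, ȳ, z̄ ∈ [0,1]². -/
import Mathlib


open unitInterval

instance : Fact ((0:ℝ) ≤ 1) := ⟨zero_le_one⟩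

/-- A continuous t-conorm on the unit interval `[0,1]`: continuous (w.r.t. the
Euclidean topology), commutative, associative, nondecreasing in each argument,
with `0` as neutral element. -/
structure IsContTConorm (S : I → I → I) : Prop where
  continuous : Continuous fun p : I × I => S p.1 p.2
  comm : ∀ x y, S x y = S y x
  assoc : ∀ x y z, S (S x y) z = S x (S y z)
  mono : ∀ x₁ x₂ y₁ y₂, x₁ ≤ x₂ → y₁ ≤ y₂ → S x₁ y₁ ≤ S x₂ y₂
  zero_left : ∀ x, S 0 x = x

/-- The residuum of a t-conorm: `x ⊸ y = inf {z ∈ [0,1] : S(z,x) ≥ y}`. -/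
noncomputable def resid (S : I → I → I) (x y : I) : I :=
  sInf {z : I | y ≤ S z x}
/-- The distance induced by the residuum: `d(x,y) = max(x ⊸ y, y ⊸ x)`. -/
noncomputable def rdist (S : I → I → I) (x y : I) : I :=
  max (resid S x y) (resid S y x)

/-- `S` is weaker than the Łukasiewicz t-conorm `S_L(x,y) = min(x+y,1)`. -/
def WeakerThanLukasiewicz (S : I → I → I) : Prop :=
  ∀ x y : I, (S x y : ℝ) ≤ min ((x : ℝ) + (y : ℝ)) 1

/-- The induced distance on `[0,1]²`:
`𝐝((x₁,x₂),(y₁,y₂)) = S(d(x₁,y₁), d(x₂,y₂))`. -/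
noncomputable def rdist2 (S : I → I → I) (p q : I × I) : I :=
  S (rdist S p.1 q.1) (rdist S p.2 q.2)

-- Auxiliary lemmas

lemma one_mem_resid_set (S : I → I → I) (hS : IsContTConorm S) (x y : I) :
    y ≤ S 1 x := by
  have h1 : S 1 (0:I) ≤ S 1 x := hS.mono _ _ _ _ le_rfl nonneg'
  have h2 : S 1 (0:I) = 1 := by rw [hS.comm, hS.zero_left]
  calc y ≤ 1 := le_one'
    _ = S 1 (0:I) := h2.symm
    _ ≤ S 1 x := h1

lemma resid_set_closed (S : I → I → I) (hS : IsContTConorm S) (x y : I) :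
    IsClosed {z : I | y ≤ S z x} := by
  have hc0 : Continuous fun z : I => S z x := by
    have := hS.continuous.comp (Continuous.prodMk continuous_id (continuous_const (y := x)))
    exact this
  have hc : Continuous fun z : I => ((S z x : I) : ℝ) :=
    continuous_subtype_val.comp hc0
  have : {z : I | y ≤ S z x} = (fun z : I => ((S z x : I) : ℝ)) ⁻¹' Set.Ici (y : ℝ) := by
    ext z; simp [Set.mem_preimage, Subtype.coe_le_coe]
  rw [this]
  exact isClosed_Ici.preimage hc

lemma resid_mem (S : I → I → I) (hS : IsContTConorm S) (x y : I) :
    y ≤ S (resid S x y) x := by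
  have hcl := resid_set_closed S hS x y
  have hne : (1 : I) ∈ {z : I | y ≤ S z x} := one_mem_resid_set S hS x y
  obtain ⟨m, hm⟩ := hcl.isCompact.exists_isLeast ⟨1, hne⟩
  have : resid S x y = m := hm.csInf_eq
  rw [this]; exact hm.1

lemma resid_le (S : I → I → I) {x y z : I} (h : y ≤ S z x) : resid S x y ≤ z :=
  sInf_le h

lemma resid_zero_iff (S : I → I → I) (hS : IsContTConorm S) (x y : I) :
    resid S x y = 0 ↔ y ≤ x := by
  constructor
  · intro h
    have := resid_mem S hS x y
    rwa [h, hS.zero_left] at this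
  · intro h
    have : resid S x y ≤ 0 := resid_le S (by rwa [hS.zero_left])
    exact le_antisymm this nonneg'

lemma resid_triangle (S : I → I → I) (hS : IsContTConorm S) (x y z : I) :
    resid S x y ≤ S (resid S x z) (resid S z y) := by
  apply resid_le
  calc y ≤ S (resid S z y) z := resid_mem S hS z y
    _ ≤ S (resid S z y) (S (resid S x z) x) :=
        hS.mono _ _ _ _ le_rfl (resid_mem S hS x z)
    _ = S (S (resid S z y) (resid S x z)) x := (hS.assoc _ _ _).symm
    _ = S (S (resid S x z) (resid S z y)) x := by rw [hS.comm (resid S z y)]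

lemma rdist_comm (S : I → I → I) (x y : I) : rdist S x y = rdist S y x :=
  max_comm _ _

lemma rdist_zero_iff (S : I → I → I) (hS : IsContTConorm S) (x y : I) :
    rdist S x y = 0 ↔ x = y := by
  rw [rdist]
  constructor
  · intro h
    have h1 : resid S x y = 0 := le_antisymm (le_trans (le_max_left _ _) h.le) nonneg'
    have h2 : resid S y x = 0 := le_antisymm (le_trans (le_max_right _ _) h.le) nonneg'
    exact le_antisymm ((resid_zero_iff S hS y x).1 h2) ((resid_zero_iff S hS x y).1 h1)
  · rintro rfl
    rw [(resid_zero_iff S hS x x).2 le_rfl]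
    simp

lemma rdist_triangle (S : I → I → I) (hS : IsContTConorm S) (x y z : I) :
    rdist S x y ≤ S (rdist S x z) (rdist S z y) := by
  apply max_le
  · exact le_trans (resid_triangle S hS x y z)
      (hS.mono _ _ _ _ (le_max_left _ _) (le_max_left _ _))
  · calc resid S y x ≤ S (resid S y z) (resid S z x) := resid_triangle S hS y x z
      _ ≤ S (rdist S z y) (rdist S x z) :=
        hS.mono _ _ _ _ (le_max_right _ _) (le_max_right _ _)
      _ = S (rdist S x z) (rdist S z y) := hS.comm _ _

lemma S_exchange (S : I → I → I) (hS : IsContTConorm S) (a b c d : I) :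
    S (S a b) (S c d) = S (S a c) (S b d) := by
  rw [hS.assoc, hS.assoc, ← hS.assoc b c d, hS.comm b c, hS.assoc c b d]

lemma S_zero_iff (S : I → I → I) (hS : IsContTConorm S) (a b : I) :
    S a b = 0 ↔ a = 0 ∧ b = 0 := by
  constructor
  · intro h
    have ha : a ≤ S a b := by
      calc a = S 0 a := (hS.zero_left a).symm
        _ = S a 0 := hS.comm _ _
        _ ≤ S a b := hS.mono _ _ _ _ le_rfl nonneg'
    have hb : b ≤ S a b := by
      calc b = S 0 b := (hS.zero_left b).symm
        _ ≤ S a b := hS.mono _ _ _ _ nonneg' le_rfl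
    exact ⟨le_antisymm (h ▸ ha) nonneg', le_antisymm (h ▸ hb) nonneg'⟩
  · rintro ⟨rfl, rfl⟩
    exact hS.zero_left 0

/-- For a continuous t-conorm weaker than Łukasiewicz,
`𝐝((x₁,x₂),(y₁,y₂)) = S(d(x₁,y₁), d(x₂,y₂))` is a metric on `[0,1]²`. -/
theorem rdist2_is_metric (S : I → I → I) (hS : IsContTConorm S)
    (hweak : WeakerThanLukasiewicz S) :
    ∀ p q r : I × I,
      (rdist2 S p q = 0 ↔ p = q) ∧
      rdist2 S p q = rdist2 S q p ∧
      (rdist2 S p q : ℝ) ≤ (rdist2 S p r : ℝ) + (rdist2 S r q : ℝ) := by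
  intro p q r
  refine ⟨?_, ?_, ?_⟩
  · rw [rdist2, S_zero_iff S hS, rdist_zero_iff S hS, rdist_zero_iff S hS,
      Prod.ext_iff]
  · rw [rdist2, rdist2, rdist_comm S p.1, rdist_comm S p.2]
  · have h1 : rdist2 S p q ≤ S (rdist2 S p r) (rdist2 S r q) := by
      calc rdist2 S p q
          ≤ S (S (rdist S p.1 r.1) (rdist S r.1 q.1))
              (S (rdist S p.2 r.2) (rdist S r.2 q.2)) :=
            hS.mono _ _ _ _ (rdist_triangle S hS _ _ _) (rdist_triangle S hS _ _ _)
        _ = S (rdist2 S p r) (rdist2 S r q) := S_exchange S hS _ _ _ _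
    have h2 : ((S (rdist2 S p r) (rdist2 S r q) : I) : ℝ) ≤
        (rdist2 S p r : ℝ) + (rdist2 S r q : ℝ) :=
      le_trans (hweak _ _) (min_le_left _ _)
    exact le_trans (Subtype.coe_le_coe.2 h1) h2
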